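/- arXiv:1811.02327 — 2 statements merged into one kernel-verified Lean document; each statement's English description precedes it below -/
import Mathlib

section
/- Let n ≥ 2 be a finite ordinal, let A ∈ SC_n, let i,j ∈ n, and let x be an atom of A. Then p_{ij} x ≠ 0. -/
namespace CylRep

/-- The replacement `[i/j]` on `n`: fixes everything except sending `i` to `j`. -/
def replFn (n : ℕ) (i j : Fin n) : Fin n → Fin n := fun k => if k = i then j else k

/-- A Boolean algebra equipped with cylindric-type operators: cylindrifications `c i`
and diagonal elements `d i j`. -/
structure CylOps (n : ℕ) (α : Type*) [BooleanAlgebra α] where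
  c : Fin n → α → α
  d : Fin n → Fin n → α

variable {n : ℕ} {α : Type*} {β : Type*}

section Ops
variable [BooleanAlgebra α]

/-- The substitution operator `s^i_j`: `s^i_i x = x`, and `s^i_j x = c_i (x ⊓ d_{ij})` for `i ≠ j`. -/
def CylOps.s (A : CylOps n α) (i j : Fin n) (x : α) : α :=
  if i = j then x else A.c i (x ⊓ A.d i j)

/-- The operator `t^i_j`: `t^i_i x = x`, and `t^i_j x = c_i x ⊓ d_{ij}` for `i ≠ j`. -/
def CylOps.t (A : CylOps n α) (i j : Fin n) (x : α) : α :=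
  if i = j then x else A.c i x ⊓ A.d i j

/-- The term `s^i_j c_j x ⊓ s^j_i c_i x ⊓ ∏_{k ≠ i,j} s^k_i s^i_j s^j_k c_k x`
(the empty product, when `n = 2`, is `⊤`). -/
def CylOps.pRaw (A : CylOps n α) (i j : Fin n) (x : α) : α :=
  A.s i j (A.c j x) ⊓ A.s j i (A.c i x) ⊓
    (Finset.univ.filter (fun k : Fin n => k ≠ i ∧ k ≠ j)).inf
      (fun k => A.s k i (A.s i j (A.s j k (A.c k x))))

/-- The operator `p_{ij}`: `p_{ii} x = x`, and otherwise the term `pRaw`. -/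
def CylOps.p (A : CylOps n α) (i j : Fin n) (x : α) : α :=
  if i = j then x else A.pRaw i j x

/-- `tauSeq is js t = [i_t/j_t] ∘ ⋯ ∘ [i_1/j_1]` (0-indexed: composes the first `t`
replacements, the one of index `0` acting first); `tauSeq is js 0 = id`. -/
def tauSeq (is js : ℕ → Fin n) : ℕ → (Fin n → Fin n)
  | 0 => id
  | t + 1 => replFn n (is t) (js t) ∘ tauSeq is js t

/-- `lhsSeq A is js ks x m = s^{i_m}_{j_m} c_{k_m} ⋯ s^{i_1}_{j_1} c_{k_1} x` (0-indexed). -/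
def lhsSeq (A : CylOps n α) (is js ks : ℕ → Fin n) (x : α) : ℕ → α
  | 0 => x
  | t + 1 => A.s (is t) (js t) (A.c (ks t) (lhsSeq A is js ks x t))

/-- The set `K = {i_1, …, i_m, k_1, …, k_m} \ {i}` (0-indexed). -/
def Kset (m : ℕ) (is ks : ℕ → Fin n) (i : Fin n) : Finset (Fin n) :=
  (((Finset.range m).image is) ∪ ((Finset.range m).image ks)).erase i

/-- Axiom (Ax7): for every `m ≥ 1` and all indices `i_1,…,i_m, j_1,…,j_m, k_1,…,k_m, i`
such that `k_{t+1} ∉ ([i_t/j_t]∘⋯∘[i_1/j_1]) * K` for all `t < m`,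
`s^{i_m}_{j_m} c_{k_m} ⋯ s^{i_1}_{j_1} c_{k_1} x ⊓ ∏ {d_{l, τ l} : l ∈ K} ≤ c_i x`,
where `τ = [i_m/j_m]∘⋯∘[i_1/j_1]` and `K = {i_1,…,i_m,k_1,…,k_m} \ {i}`. -/
def Ax7 (A : CylOps n α) : Prop :=
  ∀ m : ℕ, 1 ≤ m → ∀ (is js ks : ℕ → Fin n) (i : Fin n),
    (∀ t < m, ks t ∉ (Kset m is ks i).image (tauSeq is js t)) →
    ∀ x : α,
      lhsSeq A is js ks x m ⊓
          (Kset m is ks i).inf (fun l => A.d l (tauSeq is js m l)) ≤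
        A.c i x

/-- Axiom (Ax11) (stated for general `n` via proofs that `0 < n` and `1 < n`):
`x ⊓ -d_{01} ≤ c_0 c_1 (-d_{01} ⊓ s^0_1 c_1 x ⊓ s^1_0 c_0 x)`. -/
def Ax11 (A : CylOps n α) : Prop :=
  ∀ (h0 : 0 < n) (h1 : 1 < n) (x : α),
    x ⊓ (A.d ⟨0, h0⟩ ⟨1, h1⟩)ᶜ ≤
      A.c ⟨0, h0⟩ (A.c ⟨1, h1⟩
        ((A.d ⟨0, h0⟩ ⟨1, h1⟩)ᶜ ⊓ A.s ⟨0, h0⟩ ⟨1, h1⟩ (A.c ⟨1, h1⟩ x) ⊓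
          A.s ⟨1, h1⟩ ⟨0, h0⟩ (A.c ⟨0, h0⟩ x)))

/-- Axiom (Ax12): `x ≤ c_i c_j (s^i_j c_j x ⊓ s^j_i c_i x ⊓ ∏_{k≠i,j} s^k_i s^i_j s^j_k c_k x)`. -/
def Ax12 (A : CylOps n α) : Prop :=
  ∀ (i j : Fin n) (x : α), x ≤ A.c i (A.c j (A.pRaw i j x))

/-- Axioms (Ax0)–(Ax6) ((Ax0), the Boolean axioms, being the `BooleanAlgebra` instance). -/
structure IsRC6 (A : CylOps n α) : Prop where
  ax1 : ∀ i, A.c i (⊥ : α) = ⊥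
  ax2 : ∀ i (x : α), x ≤ A.c i x
  ax3 : ∀ i (x y : α), A.c i (x ⊓ A.c i y) = A.c i x ⊓ A.c i y
  ax4 : ∀ i, A.d i i = (⊤ : α)
  ax5 : ∀ i j k : Fin n, k ≠ i → k ≠ j →
    A.d i k ⊓ A.d k j ≤ A.d i j ∧ A.d i j = A.d j i ∧ A.d j i = A.c k (A.d j i)
  ax6 : ∀ (i j : Fin n) (x : α), i ≠ j → A.c i (x ⊓ A.d i j) ⊓ A.d i j ≤ x

/-- The class `RC_n`: axioms (Ax0)–(Ax7). -/
structure IsRC (A : CylOps n α) extends IsRC6 A : Prop where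
  ax7 : Ax7 A

/-- Axioms (Ax8)–(Ax10). -/
structure DCAxioms (A : CylOps n α) : Prop where
  ax8 : ∀ (i j k : Fin n) (x : α), k ≠ i → k ≠ j →
    A.c j (A.c i x) ⊓ A.d j k ≤ A.c i (A.c j x)
  ax9 : ∀ i j k : Fin n, k ≠ i → k ≠ j → A.d i j = A.c k (A.d i k ⊓ A.d k j)
  ax10 : ∀ (i j k m : Fin n) (x : α), k ≠ i → k ≠ j → k ≠ m → m ≠ i → m ≠ j →
    A.s k i (A.s i j (A.s j m (A.s m k (A.c k x)))) =
      A.s k m (A.s m i (A.s i j (A.s j k (A.c k x))))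

/-- The class `DC_n`: axioms (Ax0)–(Ax10). -/
structure IsDC (A : CylOps n α) extends IsRC A, DCAxioms A : Prop

/-- The class `SC_n`: `DC_n` together with (Ax11) when `n = 2` and (Ax12) when `n ≥ 3`. -/
structure IsSC (A : CylOps n α) extends IsDC A : Prop where
  ax11 : n = 2 → Ax11 A
  ax12 : 3 ≤ n → Ax12 A

/-- The class `DC_n⁻`: the axioms of `DC_n` with (Ax7) omitted. -/
structure IsDCminus (A : CylOps n α) extends IsRC6 A, DCAxioms A : Prop

/-- The class `SC_n⁻`: the axioms of `SC_n` with (Ax7) omitted. -/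
structure IsSCminus (A : CylOps n α) extends IsDCminus A : Prop where
  ax11 : n = 2 → Ax11 A
  ax12 : 3 ≤ n → Ax12 A

/-- `compList n [(i₁,j₁),…,(iₘ,jₘ)] = [i₁/j₁] ∘ ⋯ ∘ [iₘ/jₘ]` (so `[iₘ/jₘ]` acts first). -/
def compList (n : ℕ) (L : List (Fin n × Fin n)) : Fin n → Fin n :=
  L.foldr (fun p g => replFn n p.1 p.2 ∘ g) id

/-- `tApplyList A [(i₁,j₁),…,(iₘ,jₘ)] x = t^{iₘ}_{jₘ} ⋯ t^{i₁}_{j₁} x`. -/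
def tApplyList (A : CylOps n α) (L : List (Fin n × Fin n)) (x : α) : α :=
  L.foldl (fun y p => A.t p.1 p.2 y) x

end Ops

/-- The three classes of algebras considered. -/
inductive CylClass : Type
  | RC | DC | SC

/-- Membership of `A` in the class `K_n` for `K ∈ {RC, DC, SC}`. -/
def InClass [BooleanAlgebra α] (κ : CylClass) (A : CylOps n α) : Prop :=
  match κ with
  | CylClass.RC => IsRC A
  | CylClass.DC => IsDC A
  | CylClass.SC => IsSC A

/-- A pre-network: a finite set of nodes together with a partial map (here: a total map
`label` whose meaningful domain is `edges`) from `n`-sequences of nodes to atoms of `α`. -/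
structure PreNetwork (n : ℕ) (α : Type*) (β : Type*) [BooleanAlgebra α] where
  nodes : Finset β
  edges : Set (Fin n → β)
  label : (Fin n → β) → α
  edge_nodes : ∀ f ∈ edges, ∀ i, f i ∈ nodes
  label_atom : ∀ f ∈ edges, IsAtom (label f)

/-- `g ≡_i f`: the sequences agree everywhere except possibly at `i`. -/
def EqExcept (i : Fin n) (f g : Fin n → β) : Prop := ∀ l, l ≠ i → f l = g l

/-- A set of sequences is diagonalizable if it is closed under `f ↦ f ∘ [i/j]`. -/
def Diagonalizable (E : Set (Fin n → β)) : Prop :=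
  ∀ f ∈ E, ∀ i j : Fin n, (f ∘ replFn n i j) ∈ E

/-- A set of sequences is permutable if it is closed under `f ↦ f ∘ [i,j]`. -/
def Permutable (E : Set (Fin n → β)) : Prop :=
  ∀ f ∈ E, ∀ i j : Fin n, (fun k => f (Equiv.swap i j k)) ∈ E

section Net
variable [BooleanAlgebra α]

/-- `h 0, …, h m` is a zigzag from `f` to `g` in the pre-network `N`. -/
def IsZigzag (A : CylOps n α) (N : PreNetwork n α β) (f g : Fin n → β)
    (m : ℕ) (h : ℕ → Fin n → β) : Prop :=
  h 0 = f ∧ h m = g ∧ (∀ t ≤ m, h t ∈ N.edges) ∧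
    (∀ t ≤ m, Set.range f ∩ Set.range g ⊆ Set.range (h t)) ∧
    (∀ t < m, ∃ i : Fin n, h t ≠ h (t + 1) ∧ EqExcept i (h t) (h (t + 1)) ∧
      A.c i (N.label (h t)) = A.c i (N.label (h (t + 1))))

/-- `N` is a network (for the class `κ` over the algebra `A`). -/
def IsNetwork (κ : CylClass) (A : CylOps n α) (N : PreNetwork n α β) : Prop :=
  (κ = CylClass.DC → Diagonalizable N.edges) ∧
  (κ = CylClass.SC → Diagonalizable N.edges ∧ Permutable N.edges) ∧
  (∀ f ∈ N.edges, ∀ i j : Fin n, N.label f ≤ A.d i j ↔ f i = f j) ∧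
  (∀ f ∈ N.edges, ∀ g ∈ N.edges,
    0 < (Set.range f ∩ Set.range g).ncard →
    (Set.range f ∩ Set.range g).ncard < n →
    ∃ m h, IsZigzag A N f g m h)

/-- `N ⊆ N'` for pre-networks. -/
def PNLe (N N' : PreNetwork n α β) : Prop :=
  N.nodes ⊆ N'.nodes ∧ N.edges ⊆ N'.edges ∧ ∀ f ∈ N.edges, N'.label f = N.label f

end Net

/-- The cylindrification `C_i` relativized to the unit `V`. -/
def CSet (V : Set (Fin n → β)) (i : Fin n) (X : Set (Fin n → β)) : Set (Fin n → β) :=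
  {f ∈ V | ∃ g ∈ X, ∀ l, l ≠ i → g l = f l}

/-- The diagonal `D_{ij}` relativized to the unit `V`. -/
def DSet (V : Set (Fin n → β)) (i j : Fin n) : Set (Fin n → β) :=
  {f ∈ V | f i = f j}

/-- `Ψ` is an embedding of `A` into the full relativized cylindric set algebra `P(V)`:
an injective Boolean homomorphism that sends `c_i` to `C_i` and `d_{ij}` to `D_{ij}`. -/
def IsRepresentation [BooleanAlgebra α] (A : CylOps n α) (V : Set (Fin n → β))
    (Ψ : α → Set (Fin n → β)) : Prop :=
  Function.Injective Ψ ∧ (∀ x, Ψ x ⊆ V) ∧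
    Ψ ⊥ = ∅ ∧ Ψ ⊤ = V ∧ (∀ x y, Ψ (x ⊔ y) = Ψ x ∪ Ψ y) ∧
    (∀ x y, Ψ (x ⊓ y) = Ψ x ∩ Ψ y) ∧ (∀ x, Ψ xᶜ = V \ Ψ x) ∧
    (∀ (i : Fin n) (x : α), Ψ (A.c i x) = CSet V i (Ψ x)) ∧
    (∀ i j : Fin n, Ψ (A.d i j) = DSet V i j)


/-- Symmetry of diagonals, derivable from (Ax9) (with `i = j`) and (Ax6). -/
lemma d_symm_of {n : ℕ} {α : Type*} [BooleanAlgebra α] {A : CylOps n α}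
    (hA : IsSC A) {i j : Fin n} (hij : i ≠ j) : A.d i j ≤ A.d j i := by
  have h9 : A.d j j = A.c i (A.d j i ⊓ A.d i j) := hA.ax9 j j i hij hij
  have h6 := hA.ax6 i j (A.d j i) hij
  rw [← h9, hA.ax4 j] at h6
  simpa using h6

/-- for `A ∈ SC_n`, `i, j ∈ n` and an atom `x`: `p_{ij} x ≠ 0`. -/
theorem statement_3 (n : ℕ) (hn : 2 ≤ n) {α : Type*} [BooleanAlgebra α]
    (A : CylOps n α) (hA : IsSC A) (i j : Fin n) (x : α) (hx : IsAtom x) :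
    A.p i j x ≠ ⊥ := by
  rcases eq_or_ne i j with rfl | hij
  · simpa [CylOps.p] using hx.1
  have hp : A.p i j x = A.pRaw i j x := if_neg hij
  rcases lt_or_ge n 3 with hn2' | hn3
  · -- the case n = 2
    have hn2 : n = 2 := by omega
    have h0 : 0 < n := by omega
    have h1 : 1 < n := by omega
    have hz : (⟨0, h0⟩ : Fin n) ≠ ⟨1, h1⟩ := by simp [Fin.ext_iff]
    have hfilter : ∀ (a b : Fin n), a ≠ b →
        (Finset.univ.filter (fun k : Fin n => k ≠ a ∧ k ≠ b)) = ∅ := by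
      intro a b hab
      apply Finset.eq_empty_of_forall_notMem
      intro k hk
      simp only [Finset.mem_filter] at hk
      obtain ⟨-, hka, hkb⟩ := hk
      have h1 := k.isLt
      have h2 := a.isLt
      have h3 := b.isLt
      have e1 : (k : ℕ) ≠ a := fun h => hka (Fin.ext h)
      have e2 : (k : ℕ) ≠ b := fun h => hkb (Fin.ext h)
      have e3 : (a : ℕ) ≠ b := fun h => hab (Fin.ext h)
      omega
    have key : A.s ⟨0, h0⟩ ⟨1, h1⟩ (A.c ⟨1, h1⟩ x) ⊓
        A.s ⟨1, h1⟩ ⟨0, h0⟩ (A.c ⟨0, h0⟩ x) ≠ ⊥ := by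
      by_cases hle : x ≤ A.d ⟨0, h0⟩ ⟨1, h1⟩
      · have hle' : x ≤ A.d ⟨1, h1⟩ ⟨0, h0⟩ := hle.trans (d_symm_of hA hz)
        have h01 : x ≤ A.s ⟨0, h0⟩ ⟨1, h1⟩ (A.c ⟨1, h1⟩ x) := by
          rw [CylOps.s, if_neg hz]
          exact le_trans (le_inf (hA.ax2 _ x) hle) (hA.ax2 _ _)
        have h10 : x ≤ A.s ⟨1, h1⟩ ⟨0, h0⟩ (A.c ⟨0, h0⟩ x) := by
          rw [CylOps.s, if_neg hz.symm]
          exact le_trans (le_inf (hA.ax2 _ x) hle') (hA.ax2 _ _)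
        intro hbot
        exact hx.1 (le_bot_iff.mp (hbot ▸ le_inf h01 h10))
      · have hxd : x ⊓ A.d ⟨0, h0⟩ ⟨1, h1⟩ = ⊥ := by
          rcases (inf_le_left : x ⊓ A.d ⟨0, h0⟩ ⟨1, h1⟩ ≤ x).lt_or_eq with h | h
          · exact hx.2 _ h
          · exact absurd (inf_eq_left.mp h) hle
        have hxc : x ≤ (A.d ⟨0, h0⟩ ⟨1, h1⟩)ᶜ :=
          le_compl_iff_disjoint_right.mpr (disjoint_iff.mpr hxd)
        intro hbot
        have hT : ((A.d ⟨0, h0⟩ ⟨1, h1⟩)ᶜ ⊓ A.s ⟨0, h0⟩ ⟨1, h1⟩ (A.c ⟨1, h1⟩ x) ⊓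
            A.s ⟨1, h1⟩ ⟨0, h0⟩ (A.c ⟨0, h0⟩ x)) = ⊥ := by
          apply le_bot_iff.mp
          rw [← hbot]
          exact inf_le_inf_right _ inf_le_right
        have hax := hA.ax11 hn2 h0 h1 x
        rw [hT, hA.ax1, hA.ax1] at hax
        have : x = ⊥ := le_bot_iff.mp ((inf_eq_left.mpr hxc).symm.trans_le hax)
        exact hx.1 this
    have hcase : (i = ⟨0, h0⟩ ∧ j = ⟨1, h1⟩) ∨ (i = ⟨1, h1⟩ ∧ j = ⟨0, h0⟩) := by
      have hi := i.isLt
      have hj := j.isLt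
      have hij' : (i : ℕ) ≠ j := fun h => hij (Fin.ext h)
      by_cases h : (i : ℕ) = 0
      · exact Or.inl ⟨Fin.ext h, Fin.ext (show (j : ℕ) = 1 by omega)⟩
      · exact Or.inr ⟨Fin.ext (show (i : ℕ) = 1 by omega),
          Fin.ext (show (j : ℕ) = 0 by omega)⟩
    rw [hp]
    rcases hcase with ⟨rfl, rfl⟩ | ⟨rfl, rfl⟩
    · rw [CylOps.pRaw, hfilter _ _ hz, Finset.inf_empty]
      simpa using key
    · rw [CylOps.pRaw, hfilter _ _ hz.symm, Finset.inf_empty]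
      intro hbot
      rw [inf_top_eq] at hbot
      exact key ((inf_comm _ _).trans hbot)
  · -- the case n ≥ 3
    have hax := hA.ax12 hn3 i j x
    rw [hp]
    intro hbot
    rw [hbot, hA.ax1 j, hA.ax1 i] at hax
    exact hx.1 (le_bot_iff.mp hax)

end CylRep
end

section
/- Let n ≥ 2 be a finite ordinal, let A ∈ SC_n be complete and atomic, let x, y, z be atoms of A, and let i,j,k ∈ n with k ≠ i and k ≠ j. If y ≤ s^k_i s^i_j s^j_k c_k x and z = t^i_k t^j_i t^k_j x, then c_k y = c_k z. -/
namespace CylRep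

variable {n : ℕ} {α : Type*} {β : Type*}

section AuxLemmas
variable [BooleanAlgebra α] {A : CylOps n α}

/-- Monotonicity of cylindrification, from (Ax2) and (Ax3). -/
lemma c_mono (h6 : IsRC6 A) (i : Fin n) {x y : α} (h : x ≤ y) : A.c i x ≤ A.c i y := by
  have hx : x ⊓ A.c i y = x := inf_eq_left.2 (h.trans (h6.ax2 i y))
  calc A.c i x = A.c i (x ⊓ A.c i y) := by rw [hx]
    _ = A.c i x ⊓ A.c i y := h6.ax3 i x y
    _ ≤ A.c i y := inf_le_right

/-- Idempotence of cylindrification. -/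
lemma c_idem (h6 : IsRC6 A) (i : Fin n) (x : α) : A.c i (A.c i x) = A.c i x := by
  have h := h6.ax3 i (A.c i x) x
  rw [inf_idem] at h
  exact le_antisymm (h.le.trans inf_le_right) (h6.ax2 i _)

/-- Cylindrifications are self-conjugate. -/
lemma c_conj (h6 : IsRC6 A) (i : Fin n) {x y : α} (h : x ⊓ A.c i y = ⊥) :
    A.c i x ⊓ y = ⊥ := by
  have hcompl : ((A.c i y)ᶜ ⊓ A.c i y : α) = ⊥ := by simp
  have h3 := h6.ax3 i ((A.c i y)ᶜ) y
  rw [hcompl, h6.ax1] at h3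
  have hx : x ≤ (A.c i y)ᶜ := le_compl_iff_disjoint_right.2 (disjoint_iff.2 h)
  have hle : A.c i x ⊓ y ≤ ⊥ :=
    calc A.c i x ⊓ y ≤ A.c i ((A.c i y)ᶜ) ⊓ A.c i y :=
          inf_le_inf (c_mono h6 i hx) (h6.ax2 i y)
      _ = ⊥ := h3.symm
  exact le_bot_iff.1 hle

/-- Symmetry of the diagonals, from (Ax4), (Ax6), (Ax9). -/
lemma d_symm (h6 : IsRC6 A)
    (h9 : ∀ i j k : Fin n, k ≠ i → k ≠ j → A.d i j = A.c k (A.d i k ⊓ A.d k j))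
    (p q : Fin n) : A.d p q = A.d q p := by
  rcases eq_or_ne p q with rfl | hpq
  · rfl
  have key : ∀ a b : Fin n, a ≠ b → A.d b a ≤ A.d a b := by
    intro a b hab
    have h1 := h9 a a b hab.symm hab.symm
    have h2 := h6.ax6 b a (A.d a b) hab.symm
    rw [← h1, h6.ax4, top_inf_eq] at h2
    exact h2
  exact le_antisymm (key q p hpq.symm) (key p q hpq)

end AuxLemmas

/-- for complete atomic `A ∈ SC_n`, atoms `x, y, z` and `k ≠ i, j`:
if `y ≤ s^k_i s^i_j s^j_k c_k x` and `z = t^i_k t^j_i t^k_j x` then `c_k y = c_k z`. -/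
theorem statement_4 (n : ℕ) (hn : 2 ≤ n) {α : Type*}
    [CompleteBooleanAlgebra α] [IsAtomic α]
    (A : CylOps n α) (hA : IsSC A) (x y z : α)
    (hx : IsAtom x) (hy : IsAtom y) (hz : IsAtom z)
    (i j k : Fin n) (hki : k ≠ i) (hkj : k ≠ j)
    (h1 : y ≤ A.s k i (A.s i j (A.s j k (A.c k x))))
    (h2 : z = A.t i k (A.t j i (A.t k j x))) :
    A.c k y = A.c k z := by
  have h6 : IsRC6 A := hA.toIsDC.toIsRC.toIsRC6
  have hsym := d_symm h6 hA.toIsDC.toDCAxioms.ax9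
  -- The substitution term equals `c_k z` as an identity.
  have hS : A.s k i (A.s i j (A.s j k (A.c k x))) = A.c k z := by
    subst h2
    rcases eq_or_ne i j with rfl | hij
    · have hik : ¬ (i = k) := fun h => hki h.symm
      simp only [CylOps.s, CylOps.t, if_pos rfl, if_true, if_neg hki, if_neg hik]
      rw [hsym i k]
    · have hik : ¬ (i = k) := fun h => hki h.symm
      have hjk : ¬ (j = k) := fun h => hkj h.symm
      have hji : ¬ (j = i) := fun h => hij h.symm
      simp only [CylOps.s, CylOps.t, if_neg hki, if_neg hkj, if_neg hik, if_neg hjk,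
        if_neg hij, if_neg hji]
      rw [hsym k j, hsym j i, hsym i k]
  have hyz : y ≤ A.c k z := h1.trans hS.le
  have hky : A.c k y ≤ A.c k z := by
    have h := c_mono h6 k hyz
    rwa [c_idem h6] at h
  -- reverse direction: use that `y` and `z` are atoms and conjugation.
  have hne2 : A.c k y ⊓ z ≠ ⊥ := by
    intro hb
    have hzy : z ⊓ A.c k y = ⊥ := by rwa [inf_comm] at hb
    have h0 : A.c k z ⊓ y = ⊥ := c_conj h6 k hzy
    have : y = ⊥ := by rwa [inf_comm, inf_eq_left.2 hyz] at h0
    exact hy.1 this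
  have hzle : z ≤ A.c k y := by
    rcases (hz.le_iff.1 (inf_le_right : A.c k y ⊓ z ≤ z)) with hb | hb
    · exact absurd hb hne2
    · rw [← hb]; exact inf_le_left
  have hkz : A.c k z ≤ A.c k y := by
    have h := c_mono h6 k hzle
    rwa [c_idem h6] at h
  exact le_antisymm hky hkz

end CylRep
end
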